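/- arXiv:2306.06017 — 9 statements merged into one kernel-verified Lean document; each statement's English description precedes it below -/
import Mathlib

section
/- Let D be a digraph on a finite vertex type V, let k ≥ 2, and let λ : V → ZMod k be a labeling of the vertices. Then λ is k-winnable (there is a finite sequence of vertex toggles turning λ into the identically-zero labeling) if and only if there exists x : V → ZMod k such that for every vertex v, λ(v) + x(v) + Σ_{u : u → v} x(u) = 0; equivalently, the equation Nᵀx = −λ has a solution, where N is the neighborhood matrix of D over ZMod k. -/
open scoped Classical
open Matrix

/-- Toggling vertex `u` adds 1 to the label of `u` and of every vertex that `u` dominates. -/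
noncomputable def toggle {V : Type*} (adj : V → V → Prop) {k : ℕ}
    (lam : V → ZMod k) (u : V) : V → ZMod k :=
  fun w => lam w + if w = u ∨ adj u w then 1 else 0

/-- The neighborhood matrix of a digraph over `ZMod k`. -/
noncomputable def neighborhoodMatrix {V : Type*} (adj : V → V → Prop) (k : ℕ) :
    Matrix V V (ZMod k) :=
  Matrix.of fun u v => if u = v ∨ adj u v then 1 else 0

lemma foldl_toggle_apply {V : Type*} (adj : V → V → Prop) {k : ℕ}
    (L : List V) (lam : V → ZMod k) (w : V) :
    L.foldl (toggle adj) lam w =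
      lam w + (L.map (fun u => if w = u ∨ adj u w then (1 : ZMod k) else 0)).sum := by
  induction L generalizing lam with
  | nil => simp
  | cons a t ih =>
    simp only [List.foldl_cons, List.map_cons, List.sum_cons, ih]
    simp [toggle, add_assoc]

/-- general list-sum-to-finset-sum lemma -/
lemma list_sum_eq {V : Type*} [Fintype V] [DecidableEq V] (L : List V)
    {M : Type*} [AddCommMonoid M] (f : V → M) :
    (L.map f).sum = ∑ u : V, L.count u • f u := by
  rw [Finset.sum_list_map_count]
  exact Finset.sum_subset (Finset.subset_univ L.toFinset)
    (fun u _ hu => by simp [List.count_eq_zero_of_not_mem (by simpa using hu)])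

/- no DecidableEq here so all `if` instances are classical, matching `toggle`. -/
lemma sum_ind {V : Type*} [Fintype V] (adj : V → V → Prop)
    (hirr : ∀ v : V, ¬ adj v v) {k : ℕ} (c : V → ZMod k) (w : V) :
    (∑ u : V, c u * (if w = u ∨ adj u w then (1 : ZMod k) else 0)) =
      c w + ∑ u ∈ Finset.univ.filter (fun u => adj u w), c u := by
  classical
  have h1 : (∑ u : V, c u * (if w = u ∨ adj u w then (1 : ZMod k) else 0))
      = ∑ u ∈ Finset.univ.filter (fun u => w = u ∨ adj u w), c u := by
    rw [Finset.sum_filter]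
    refine Finset.sum_congr rfl fun u _ => ?_
    by_cases h : w = u ∨ adj u w <;> simp [h]
  rw [h1]
  have h2 : Finset.univ.filter (fun u => w = u ∨ adj u w)
      = insert w (Finset.univ.filter (fun u => adj u w)) := by
    ext u
    simp only [Finset.mem_filter, Finset.mem_univ, true_and, Finset.mem_insert]
    constructor
    · rintro (rfl | h)
      exact Or.inl rfl
      exact Or.inr h
    · rintro (rfl | h)
      exact Or.inl rfl
      exact Or.inr h
  rw [h2, Finset.sum_insert (by simp [hirr w])]

theorem winnable_iff_solution {V : Type*} [Fintype V] [DecidableEq V]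
    (adj : V → V → Prop) (hirr : ∀ v : V, ¬ adj v v)
    (k : ℕ) (hk : 2 ≤ k) (lam : V → ZMod k) :
    ((∃ L : List V, L.foldl (toggle adj) lam = fun _ => 0) ↔
      ∃ x : V → ZMod k, ∀ v : V,
        lam v + x v + ∑ u ∈ Finset.univ.filter (fun u => adj u v), x u = 0) ∧
    ((∃ L : List V, L.foldl (toggle adj) lam = fun _ => 0) ↔
      ∃ x : V → ZMod k, (neighborhoodMatrix adj k)ᵀ *ᵥ x = -lam) := by
  haveI : NeZero k := ⟨by omega⟩
  have main : (∃ L : List V, L.foldl (toggle adj) lam = fun _ => 0) ↔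
      ∃ x : V → ZMod k, ∀ v : V,
        lam v + x v + ∑ u ∈ Finset.univ.filter (fun u => adj u v), x u = 0 := by
    constructor
    · rintro ⟨L, hL⟩
      refine ⟨fun u => (L.count u : ZMod k), fun v => ?_⟩
      have h := congrFun hL v
      rw [foldl_toggle_apply, list_sum_eq] at h
      simp only [nsmul_eq_mul] at h
      have hs := sum_ind adj hirr (fun u => (L.count u : ZMod k)) v
      simp only at hs ⊢
      linear_combination h - hs
    · rintro ⟨x, hx⟩
      refine ⟨Finset.univ.toList.flatMap fun u => List.replicate (x u).val u, ?_⟩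
      funext w
      set L := Finset.univ.toList.flatMap fun u => List.replicate (x u).val u with hLdef
      have hcount : ∀ u : V, (L.count u : ZMod k) = x u := by
        intro u
        have hc : L.count u = (x u).val := by
          rw [hLdef, List.count_flatMap]
          have h2 : ∀ a ∈ Finset.univ.toList,
              (List.count u ∘ fun b => List.replicate (x b).val b) a
                = (fun a => if a = u then (x a).val else 0) a := by
            intro a _; simp [List.count_replicate]
          rw [List.map_congr_left h2, Finset.sum_map_toList]
          simp
        rw [hc, ZMod.natCast_val, ZMod.cast_id]
      rw [foldl_toggle_apply, list_sum_eq]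
      simp only [nsmul_eq_mul]
      have hs := sum_ind adj hirr (fun u => (L.count u : ZMod k)) w
      rw [hs]
      simp only [hcount]
      linear_combination hx w
  refine ⟨main, main.trans ?_⟩
  apply exists_congr
  intro x
  have hmv : ∀ v, ((neighborhoodMatrix adj k)ᵀ *ᵥ x) v
      = x v + ∑ u ∈ Finset.univ.filter (fun u => adj u v), x u := by
    intro v
    rw [← sum_ind adj hirr x v]
    simp only [Matrix.mulVec, Matrix.transpose_apply, neighborhoodMatrix, Matrix.of_apply,
      dotProduct]
    refine Finset.sum_congr rfl fun u _ => ?_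
    by_cases h1 : u = v
    · subst h1; simp
    · by_cases h2 : adj u v
      · simp [h1, h2]
      · have h3 : ¬ (v = u) := fun h => h1 h.symm
        simp [h1, h2, h3]
  constructor
  · intro h
    funext v
    rw [hmv v, Pi.neg_apply]
    linear_combination h v
  · intro h v
    have := congrFun h v
    rw [hmv v, Pi.neg_apply] at this
    linear_combination this
end

section
/- Let D be a digraph on a finite vertex type V and let k ≥ 2. Then D is k-Always Winnable (every labeling λ : V → ZMod k is k-winnable by a finite sequence of vertex toggles) if and only if the neighborhood matrix N of D is invertible over ZMod k. -/
open scoped Classical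

/-!
Toggling `u` adds the row of `u` of the neighborhood matrix `N`, so a sequence of toggles `L` adds
`c ᵥ* N`, where `c v` is the number of occurrences of `v` in `L`. Over `ZMod k` with `k ≠ 0` every
vector `c` arises this way (take `(c v).val` copies of each `v`), so `D` is `k`-Always Winnable
exactly when `c ↦ c ᵥ* N` is surjective, i.e. when `N` is invertible.
-/

section

open Matrix

variable {V : Type*} (adj : V → V → Prop) {k : ℕ}

theorem toggle_eq_add_row (lam : V → ZMod k) (u : V) :
    toggle adj lam u = lam + (neighborhoodMatrix adj k).row u := by
  ext w
  simp [toggle, neighborhoodMatrix, eq_comm]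

variable [DecidableEq V]

theorem cast_count_cons (u : V) (L : List V) :
    (fun v => ((u :: L).count v : ZMod k)) = (fun v => (L.count v : ZMod k)) + Pi.single u 1 := by
  ext v
  by_cases h : u = v <;> simp [h, eq_comm]

variable [Fintype V]

theorem foldl_toggle_eq_add_vecMul (L : List V) (lam : V → ZMod k) :
    L.foldl (toggle adj) lam =
      lam + (fun v => (L.count v : ZMod k)) ᵥ* neighborhoodMatrix adj k := by
  induction L generalizing lam with
  | nil => simp [← Pi.zero_def]
  | cons u L ih =>
    rw [List.foldl_cons, ih, toggle_eq_add_row, cast_count_cons, add_vecMul,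
      single_one_vecMul]
    abel

theorem exists_list_count_eq (g : V → ℕ) : ∃ L : List V, ∀ v, L.count v = g v :=
  ⟨(Finsupp.toMultiset (Finsupp.equivFunOnFinite.symm g)).toList, fun v => by
    rw [← Multiset.coe_count, Multiset.coe_toList, Finsupp.count_toMultiset]
    rfl⟩

theorem exists_foldl_toggle_eq_zero_iff [NeZero k] (lam : V → ZMod k) :
    (∃ L : List V, L.foldl (toggle adj) lam = 0) ↔
      ∃ c : V → ZMod k, c ᵥ* neighborhoodMatrix adj k = -lam := by
  simp only [foldl_toggle_eq_add_vecMul, add_eq_zero_iff_eq_neg']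
  constructor
  · rintro ⟨L, hL⟩
    exact ⟨_, hL⟩
  · rintro ⟨c, hc⟩
    obtain ⟨L, hL⟩ := exists_list_count_eq fun v => (c v).val
    refine ⟨L, ?_⟩
    simpa [hL] using hc

end

theorem kAW_iff_neighborhoodMatrix_invertible_general {V : Type*} [Fintype V] [DecidableEq V]
    (adj : V → V → Prop) (k : ℕ) (hk : 2 ≤ k) :
    (∀ lam : V → ZMod k, ∃ L : List V, L.foldl (toggle adj) lam = fun _ => 0) ↔
      IsUnit (neighborhoodMatrix adj k) := by
  have : NeZero k := ⟨by omega⟩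
  rw [← Matrix.vecMul_surjective_iff_isUnit]
  simp only [← Pi.zero_def, exists_foldl_toggle_eq_zero_iff]
  exact ⟨fun h lam => by simpa using h (-lam), fun h lam => h (-lam)⟩

/-- A digraph is `k`-Always Winnable iff its neighborhood matrix is invertible over `ZMod k`. -/
theorem kAW_iff_neighborhoodMatrix_invertible {V : Type*} [Fintype V] [DecidableEq V]
    (adj : V → V → Prop) (hirr : ∀ v : V, ¬ adj v v) (k : ℕ) (hk : 2 ≤ k) :
    (∀ lam : V → ZMod k, ∃ L : List V, L.foldl (toggle adj) lam = fun _ => 0) ↔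
      IsUnit (neighborhoodMatrix adj k) :=
  kAW_iff_neighborhoodMatrix_invertible_general adj k hk
end

section
/- Let D be an acyclic digraph on a finite vertex type V, i.e., there is no vertex v with a nontrivial directed walk from v back to v (no v satisfies TransGen adj v v). Then for every k ≥ 2, D is k-Always Winnable: for every labeling λ : V → ZMod k there exists x : V → ZMod k such that λ(v) + x(v) + Σ_{u : u → v} x(u) = 0 for every vertex v. -/
open scoped Classical

/-- A digraph (given by its domination relation `adj`) is `k`-Always Winnable if every labeling
of the vertices by `ZMod k` can be toggled to the zero labeling: `x v` records the number of
times vertex `v` is toggled. -/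
def kAW {V : Type*} [Fintype V] (adj : V → V → Prop) (k : ℕ) : Prop :=
  ∀ lam : V → ZMod k, ∃ x : V → ZMod k, ∀ v : V,
    lam v + x v + ∑ u ∈ Finset.univ.filter (fun u => adj u v), x u = 0

/-- Every acyclic digraph is `k`-Always Winnable for every `k ≥ 2`. -/
theorem acyclic_kAW {V : Type*} [Fintype V] (adj : V → V → Prop)
    (hirr : ∀ v : V, ¬ adj v v)
    (hacyclic : ∀ v : V, ¬ Relation.TransGen adj v v)
    (k : ℕ) (hk : 2 ≤ k) :
    kAW adj k := by
  intro lam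
  have hwf : WellFounded adj := by
    haveI : IsIrrefl V (Relation.TransGen adj) := ⟨hacyclic⟩
    have htg : WellFounded (Relation.TransGen adj) :=
      Finite.wellFounded_of_trans_of_irrefl _
    exact Subrelation.wf (fun h => Relation.TransGen.single h) htg
  set x : V → ZMod k := hwf.fix (fun v ih =>
    - lam v - ∑ u ∈ (Finset.univ.filter (fun u => adj u v)).attach,
        ih u.1 (Finset.mem_filter.mp u.2).2) with hx
  refine ⟨x, fun v => ?_⟩
  have hfix := hwf.fix_eq (fun v ih =>
    - lam v - ∑ u ∈ (Finset.univ.filter (fun u => adj u v)).attach,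
        ih u.1 (Finset.mem_filter.mp u.2).2) v
  have hxv : x v = - lam v - ∑ u ∈ (Finset.univ.filter (fun u => adj u v)).attach,
      x u.1 := by rw [hx]; exact hfix
  rw [hxv, Finset.sum_attach _ x]
  ring
end

section
/- Let D be a digraph on a finite vertex type V and let k ≥ 2. For v, w ∈ V write v ≈ w when there is a directed walk from v to w and a directed walk from w to v (reflexive-transitive closure of adjacency in both directions); ≈ is an equivalence relation, and the strong components of D are the subdigraphs induced on its equivalence classes. Then D is k-Always Winnable if and only if every strong component of D is k-Always Winnable. -/
open scoped Classical

/-- `v` and `w` are in the same strong component: there is a directed walk from `v` to `w`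
and one from `w` to `v`. -/
def sameStrongComp {V : Type*} (adj : V → V → Prop) (v w : V) : Prop :=
  Relation.ReflTransGen adj v w ∧ Relation.ReflTransGen adj w v

/-!
A labeling `λ` is winnable iff `-λ` lies in the image of the lights out matrix `1 + Aᵀ`, so `D`
is `k`-always winnable iff this matrix is invertible over `ZMod k`, i.e. iff its determinant is a
unit.
Index the vertices by a linear extension of the partial order that reachability induces on the
strong components: arcs between distinct components then only go one way, so the matrix is block
triangular, its diagonal blocks are the lights out matrices of the strong components, and its
determinant is the product of theirs.
-/

section StrongComponents

variable {V : Type*} (adj : V → V → Prop)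

/-- `V` preordered by reverse reachability: `u ≤ v` iff there is a walk from `v` to `u`. -/
def ReachOrder (_adj : V → V → Prop) : Type _ := V

instance : Preorder (ReachOrder adj) where
  le u v := Relation.ReflTransGen adj v u
  le_refl _ := .refl
  le_trans _ _ _ huv hvw := hvw.trans huv

noncomputable def strongCompRank (v : V) :
    LinearExtension (Antisymmetrization (ReachOrder adj) (· ≤ ·)) :=
  toLinearExtension (toAntisymmetrization (· ≤ ·) (show ReachOrder adj from v))

variable {adj}

theorem strongCompRank_le_of_reflTransGen {u v : V} (h : Relation.ReflTransGen adj u v) :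
    strongCompRank adj v ≤ strongCompRank adj u :=
  toLinearExtension.monotone (toAntisymmetrization_mono h)

theorem strongCompRank_eq_iff {v w : V} :
    strongCompRank adj w = strongCompRank adj v ↔ sameStrongComp adj v w :=
  Quotient.eq

end StrongComponents

section LightsOutMatrix

open Matrix

variable {V : Type*} (adj : V → V → Prop) (R : Type*)

/-- Row `v` records the toggles that change the label of `v`: `v` itself and every vertex
dominating it. -/
noncomputable def lightsOutMatrix [NonAssocSemiring R] : Matrix V V R :=
  1 + Matrix.of fun v u => if adj u v then 1 else 0

variable {R}

theorem lightsOutMatrix_mulVec_apply [Fintype V] [NonAssocSemiring R] (x : V → R) (v : V) :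
    (lightsOutMatrix adj R *ᵥ x) v
      = x v + ∑ u ∈ Finset.univ.filter (fun u => adj u v), x u := by
  rw [lightsOutMatrix, add_mulVec, one_mulVec]
  simp [mulVec, dotProduct, Finset.sum_filter]

theorem lightsOutMatrix_submatrix_subtypeVal [NonAssocSemiring R] (p : V → Prop) :
    (lightsOutMatrix adj R).submatrix Subtype.val Subtype.val
      = lightsOutMatrix (fun a b : Subtype p => adj a b) R := by
  ext a b
  simp [lightsOutMatrix, one_apply, Subtype.ext_iff]

theorem blockTriangular_lightsOutMatrix [NonAssocSemiring R] :
    (lightsOutMatrix adj R).BlockTriangular (strongCompRank adj) := by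
  intro v u hlt
  have hne : v ≠ u := by rintro rfl; exact lt_irrefl _ hlt
  have hnadj : ¬ adj u v := fun h =>
    (strongCompRank_le_of_reflTransGen (.single h)).not_gt hlt
  simp [lightsOutMatrix, hne, hnadj]

theorem det_toSquareBlock_lightsOutMatrix [Fintype V] [DecidableEq V] [CommRing R] (v : V) :
    ((lightsOutMatrix adj R).toSquareBlock (strongCompRank adj) (strongCompRank adj v)).det
      = (lightsOutMatrix (fun a b : {w : V // sameStrongComp adj v w} => adj a b) R).det := by
  rw [← lightsOutMatrix_submatrix_subtypeVal, ← det_submatrix_equiv_self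
    (Equiv.subtypeEquivRight fun _ => strongCompRank_eq_iff)]
  rfl

theorem isUnit_det_lightsOutMatrix_iff [Fintype V] [DecidableEq V] [CommRing R] :
    IsUnit (lightsOutMatrix adj R).det ↔
      ∀ v, IsUnit
        (lightsOutMatrix (fun a b : {w : V // sameStrongComp adj v w} => adj a b) R).det := by
  rw [(blockTriangular_lightsOutMatrix adj).det, IsUnit.prod_iff]
  simp only [Finset.forall_mem_image, Finset.mem_univ, true_imp_iff,
    det_toSquareBlock_lightsOutMatrix]

end LightsOutMatrix

theorem kAW_iff_isUnit_det {V : Type*} [Fintype V] [DecidableEq V] (adj : V → V → Prop)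
    (k : ℕ) :
    kAW adj k ↔ IsUnit (lightsOutMatrix adj (ZMod k)).det := by
  rw [← Matrix.isUnit_iff_isUnit_det, ← Matrix.mulVec_surjective_iff_isUnit]
  refine neg_surjective.forall.trans (forall_congr' fun lam => exists_congr fun x => ?_)
  simp only [funext_iff, Pi.neg_apply, add_assoc, neg_add_eq_zero, lightsOutMatrix_mulVec_apply]
  exact forall_congr' fun _ => eq_comm

theorem kAW_iff_strongComponents_kAW_general {V : Type*} [Fintype V]
    (adj : V → V → Prop) (k : ℕ) :
    kAW adj k ↔
      ∀ v : V, kAW (fun a b : {w : V // sameStrongComp adj v w} => adj a.1 b.1) k := by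
  rw [kAW_iff_isUnit_det, isUnit_det_lightsOutMatrix_iff]
  exact forall_congr' fun v => (kAW_iff_isUnit_det _ k).symm

/-- A digraph is `k`-Always Winnable iff each of its strong components (the subdigraphs
induced on the equivalence classes of `sameStrongComp`) is `k`-Always Winnable. -/
theorem kAW_iff_strongComponents_kAW {V : Type*} [Fintype V]
    (adj : V → V → Prop) (hirr : ∀ v : V, ¬ adj v v) (k : ℕ) (hk : 2 ≤ k) :
    kAW adj k ↔
      ∀ v : V, kAW (fun a b : {w : V // sameStrongComp adj v w} => adj a.1 b.1) k :=
  kAW_iff_strongComponents_kAW_general adj k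
end

section
/- Let D be a digraph on a finite vertex type V with |V| = n in which no two vertices are joined by arcs in both directions (for all u ≠ v, not both u → v and v → u). Let σ : Fin n ≃ V be an ordering of the vertices and suppose i+1 < n and σ(i+1) → σ(i) is an arc of D. Let τ be the ordering obtained from σ by swapping positions i and i+1 (τ = σ ∘ Equiv.swap i (i+1)). Then the feedback arc set of τ has strictly smaller cardinality than the feedback arc set of σ. -/
open scoped Classical

/-- The feedback arc set of the digraph `adj` with respect to the vertex ordering `σ`:
all arcs `(σ j, σ i)` with `σ j → σ i` and `i < j`. -/
noncomputable def feedbackArcSet {V : Type*} [Fintype V] (adj : V → V → Prop)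
    {n : ℕ} (σ : Fin n ≃ V) : Finset (V × V) :=
  Finset.univ.filter fun p : V × V => adj p.1 p.2 ∧ σ.symm p.2 < σ.symm p.1

/-! Swapping two adjacent positions `i`, `i + 1` of an ordering reverses the order of exactly
one pair of vertices, so it changes the feedback arc set only at that pair. When `σ (i+1) → σ i`
and the reverse arc is absent, the arc `(σ (i+1), σ i)` leaves the set and nothing enters it. -/

open Finset

theorem Fin.swap_lt_swap_iff_of_val_eq_succ {n : ℕ} {i i' j k : Fin n}
    (hi : (i' : ℕ) = i + 1) (h₁ : ¬ (k = i ∧ j = i')) (h₂ : ¬ (k = i' ∧ j = i)) :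
    Equiv.swap i i' k < Equiv.swap i i' j ↔ k < j := by
  rw [Equiv.swap_apply_def, Equiv.swap_apply_def]
  split_ifs <;> simp only [Fin.lt_def, Fin.ext_iff, not_and] at * <;> omega

section

variable {V : Type*} [Fintype V] {adj : V → V → Prop} {n : ℕ}

theorem mem_feedbackArcSet {σ : Fin n ≃ V} {u v : V} :
    (u, v) ∈ feedbackArcSet adj σ ↔ adj u v ∧ σ.symm v < σ.symm u := by
  simp [feedbackArcSet]

theorem feedbackArcSet_swap_trans {σ : Fin n ≃ V} {i i' : Fin n} (hi : (i' : ℕ) = i + 1)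
    (hnadj : ¬ adj (σ i) (σ i')) :
    feedbackArcSet adj ((Equiv.swap i i').trans σ) =
      (feedbackArcSet adj σ).erase (σ i', σ i) := by
  have hlt : i < i' := Fin.lt_def.2 (by omega)
  ext ⟨u, v⟩
  obtain ⟨j, rfl⟩ := σ.surjective u
  obtain ⟨k, rfl⟩ := σ.surjective v
  simp only [mem_erase, mem_feedbackArcSet, Equiv.symm_trans_apply, Equiv.symm_swap,
    Equiv.symm_apply_apply, ne_eq, Prod.mk.injEq, EmbeddingLike.apply_eq_iff_eq]
  by_cases h₁ : k = i ∧ j = i'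
  · obtain ⟨rfl, rfl⟩ := h₁
    simp [hlt.le]
  by_cases h₂ : k = i' ∧ j = i
  · obtain ⟨rfl, rfl⟩ := h₂
    simp [hnadj]
  rw [Fin.swap_lt_swap_iff_of_val_eq_succ hi h₁ h₂]
  tauto

end

theorem feedbackArcSet_card_lt_of_swap_general {V : Type*} [Fintype V]
    (adj : V → V → Prop)
    (hno2 : ∀ u v : V, u ≠ v → ¬ (adj u v ∧ adj v u))
    {n : ℕ} (σ : Fin n ≃ V)
    (i : Fin n) (hi : (i : ℕ) + 1 < n)
    (harc : adj (σ ⟨(i : ℕ) + 1, hi⟩) (σ i)) :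
    (feedbackArcSet adj ((Equiv.swap i ⟨(i : ℕ) + 1, hi⟩).trans σ)).card <
      (feedbackArcSet adj σ).card := by
  have hne : σ i ≠ σ ⟨i + 1, hi⟩ := σ.injective.ne (by simp [Fin.ext_iff])
  have hnadj : ¬ adj (σ i) (σ ⟨i + 1, hi⟩) := fun h => hno2 _ _ hne ⟨h, harc⟩
  rw [feedbackArcSet_swap_trans rfl hnadj]
  exact card_erase_lt_of_mem (mem_feedbackArcSet.2 ⟨harc, Fin.lt_def.2 (by simp)⟩)

/-- If `σ (i+1) → σ i` is an arc, then swapping positions `i` and `i+1` in the ordering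
strictly decreases the size of the feedback arc set. -/
theorem feedbackArcSet_card_lt_of_swap {V : Type*} [Fintype V]
    (adj : V → V → Prop) (hirr : ∀ v : V, ¬ adj v v)
    (hno2 : ∀ u v : V, u ≠ v → ¬ (adj u v ∧ adj v u))
    {n : ℕ} (hn : Fintype.card V = n) (σ : Fin n ≃ V)
    (i : Fin n) (hi : (i : ℕ) + 1 < n)
    (harc : adj (σ ⟨(i : ℕ) + 1, hi⟩) (σ i)) :
    (feedbackArcSet adj ((Equiv.swap i ⟨(i : ℕ) + 1, hi⟩).trans σ)).card <
      (feedbackArcSet adj σ).card :=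
  feedbackArcSet_card_lt_of_swap_general adj hno2 σ i hi harc
end

section
/- Let D be a digraph on a finite vertex type V with |V| = n in which no two vertices are joined by arcs in both directions (for all u ≠ v, not both u → v and v → u). Let σ : Fin n ≃ V be an ordering of the vertices whose feedback arc set S(σ) is minimum, i.e., |S(σ)| ≤ |S(τ)| for every ordering τ : Fin n ≃ V. Then for every arc (σ(j), σ(i)) ∈ S(σ) (so σ(j) → σ(i) with i < j), one has j − i ≥ 2. -/
open scoped Classical

/-- If `σ` has a minimum feedback arc set, then the endpoints of each feedback arc
are at least two positions apart in the ordering `σ`. -/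
theorem feedbackArc_gap_of_minimum {V : Type*} [Fintype V]
    (adj : V → V → Prop) (hirr : ∀ v : V, ¬ adj v v)
    (hno2 : ∀ u v : V, u ≠ v → ¬ (adj u v ∧ adj v u))
    {n : ℕ} (hn : Fintype.card V = n) (σ : Fin n ≃ V)
    (hmin : ∀ τ : Fin n ≃ V, (feedbackArcSet adj σ).card ≤ (feedbackArcSet adj τ).card) :
    ∀ i j : Fin n, i < j → adj (σ j) (σ i) → 2 ≤ (j : ℕ) - (i : ℕ) := by
  intro i j hij hadj
  by_contra hlt
  push_neg at hlt
  have hij' : (i : ℕ) < j := hij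
  have hji : (j : ℕ) = (i : ℕ) + 1 := by omega
  set τ : Fin n ≃ V := (Equiv.swap i j).trans σ with hτ
  have hmem : (σ j, σ i) ∈ feedbackArcSet adj σ := by
    simp only [feedbackArcSet, Finset.mem_filter, Finset.mem_univ, true_and,
      Equiv.symm_apply_apply]
    exact ⟨hadj, hij⟩
  have key : ∀ a b : Fin n, Equiv.swap i j a < Equiv.swap i j b →
      a < b ∨ (a = j ∧ b = i) := by
    intro a b h
    rw [Equiv.swap_apply_def, Equiv.swap_apply_def] at h
    split_ifs at h with h1 h2 h3 h4 h5 h6 h7 h8 <;>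
      simp only [Fin.lt_def, Fin.ext_iff] at * <;> omega
  have hsub : feedbackArcSet adj τ ⊆ (feedbackArcSet adj σ).erase (σ j, σ i) := by
    intro p hp
    simp only [feedbackArcSet, Finset.mem_filter, Finset.mem_univ, true_and] at hp
    obtain ⟨hadjp, hlt'⟩ := hp
    have hlt'' : Equiv.swap i j (σ.symm p.2) < Equiv.swap i j (σ.symm p.1) := by
      simpa [hτ, Equiv.symm_trans_apply] using hlt'
    rcases key _ _ hlt'' with hab | ⟨ha, hb⟩
    · refine Finset.mem_erase.mpr ⟨?_, ?_⟩
      · intro hpe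
        rw [hpe] at hlt''
        simp only [Equiv.symm_apply_apply, Equiv.swap_apply_left,
          Equiv.swap_apply_right] at hlt''
        exact absurd hlt'' (not_lt.mpr hij.le)
      · simp only [feedbackArcSet, Finset.mem_filter, Finset.mem_univ, true_and]
        exact ⟨hadjp, hab⟩
    · exfalso
      have h2 : p.2 = σ j := by
        have := congrArg σ ha; simpa using this
      have h1 : p.1 = σ i := by
        have := congrArg σ hb; simpa using this
      rw [h1, h2] at hadjp
      refine hno2 (σ j) (σ i) (fun h => ?_) ⟨hadj, hadjp⟩
      have : j = i := σ.injective h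
      rw [Fin.ext_iff] at this; omega
  have hcard : (feedbackArcSet adj τ).card < (feedbackArcSet adj σ).card := by
    calc (feedbackArcSet adj τ).card ≤ ((feedbackArcSet adj σ).erase (σ j, σ i)).card :=
        Finset.card_le_card hsub
      _ < (feedbackArcSet adj σ).card := Finset.card_erase_lt_of_mem hmem
  exact absurd (hmin τ) (by omega)
end

section
/- Let D be a digraph on a finite vertex type V with |V| = n, let k ≥ 2, let σ : Fin n ≃ V be an ordering of the vertices with feedback arc set S = S(σ), and let λ : V → ZMod k be any labeling. Then there exists x : V → ZMod k such that for every vertex v that is not a head feedback vertex of S (i.e., v is not the head of any arc in S), λ(v) + x(v) + Σ_{u : u → v} x(u) = 0. -/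
open scoped Classical

/-- `v` is a head feedback vertex: it is the head of some arc of the feedback arc set. -/
def isHeadFeedback {V : Type*} [Fintype V] (adj : V → V → Prop)
    {n : ℕ} (σ : Fin n ≃ V) (v : V) : Prop :=
  ∃ u : V, (u, v) ∈ feedbackArcSet adj σ

/-!
Processing the vertices in the order `σ`, toggle each one just enough to bring its label to `0`.
Every in-neighbour of a vertex that is not a head feedback vertex comes strictly earlier
(strictly, as the digraph is loopless), so no later toggle changes that vertex's label.
-/

theorem exists_add_add_sum_eq_zero_of_wellFounded {V R : Type*} [AddCommGroup R]
    {r : V → V → Prop} (hr : WellFounded r) (N : V → Finset V)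
    (hN : ∀ v, ∀ u ∈ N v, r u v) (c : V → R) :
    ∃ x : V → R, ∀ v, c v + x v + ∑ u ∈ N v, x u = 0 := by
  let x : V → R := hr.fix fun v rec => -(c v + ∑ u ∈ (N v).attach, rec u (hN v u u.2))
  have hx : ∀ v, x v = -(c v + ∑ u ∈ N v, x u) := fun v => by
    rw [← Finset.sum_attach (N v) x]
    exact hr.fix_eq _ v
  exact ⟨x, fun v => by rw [hx v]; abel⟩

theorem symm_lt_of_adj_of_not_isHeadFeedback {V : Type*} [Fintype V]
    {adj : V → V → Prop} (hirr : ∀ v : V, ¬ adj v v) {n : ℕ} {σ : Fin n ≃ V} {u v : V}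
    (hv : ¬ isHeadFeedback adj σ v) (huv : adj u v) : σ.symm u < σ.symm v := by
  refine lt_of_le_of_ne (not_lt.mp fun hvu => hv ⟨u, ?_⟩) fun h => ?_
  · simp [feedbackArcSet, huv, hvu]
  · exact hirr v (σ.symm.injective h ▸ huv)

theorem toggle_to_zero_off_headFeedback_general {V : Type*} [Fintype V]
    (adj : V → V → Prop) (hirr : ∀ v : V, ¬ adj v v)
    (k : ℕ)
    {n : ℕ} (σ : Fin n ≃ V)
    (lam : V → ZMod k) :
    ∃ x : V → ZMod k, ∀ v : V, ¬ isHeadFeedback adj σ v →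
      lam v + x v + ∑ u ∈ Finset.univ.filter (fun u => adj u v), x u = 0 := by
  obtain ⟨x, hx⟩ := exists_add_add_sum_eq_zero_of_wellFounded
    (InvImage.wf σ.symm wellFounded_lt)
    (fun v => Finset.univ.filter fun u => adj u v ∧ σ.symm u < σ.symm v)
    (fun v u hu => (Finset.mem_filter.mp hu).2.2) lam
  refine ⟨x, fun v hv => ?_⟩
  have hN : Finset.univ.filter (fun u => adj u v)
      = Finset.univ.filter fun u => adj u v ∧ σ.symm u < σ.symm v :=
    Finset.filter_congr fun u _ =>
      ⟨fun huv => ⟨huv, symm_lt_of_adj_of_not_isHeadFeedback hirr hv huv⟩, And.left⟩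
  rw [hN]
  exact hx v

/-- For any labeling, the vertices can be toggled so that every vertex that is not a
head feedback vertex ends with label 0. -/
theorem toggle_to_zero_off_headFeedback {V : Type*} [Fintype V]
    (adj : V → V → Prop) (hirr : ∀ v : V, ¬ adj v v)
    (k : ℕ) (hk : 2 ≤ k)
    {n : ℕ} (hn : Fintype.card V = n) (σ : Fin n ≃ V)
    (lam : V → ZMod k) :
    ∃ x : V → ZMod k, ∀ v : V, ¬ isHeadFeedback adj σ v →
      lam v + x v + ∑ u ∈ Finset.univ.filter (fun u => adj u v), x u = 0 :=
  toggle_to_zero_off_headFeedback_general adj hirr k σ lam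
end

section
/- Let r ≥ 1 and s ≥ 0 be natural numbers, let h : Fin r → ℕ with h(i) ≥ 1 for all i, and set N = Σ_i h(i). Partition the indices 0, 1, …, N−1 into r consecutive blocks B_1, …, B_r of sizes h(1), …, h(r). Let M be the (N+1) × (N+1) integer matrix defined by: for p, q < N lying in the same block, M[p][q] = 1 if q ≤ p and 0 if q > p; for p, q < N in different blocks, M[p][q] = 0; M[p][N] = 1 for every p < N; M[N][q] = −1 for every q < N; and M[N][N] = s + 1. Then det(M) = r + s + 1. -/
/-! Each block `L_{h i}` maps the indicator vector of its first index to the all-ones vector.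
Hence subtracting from the last column the columns of the `r` block starts, a column operation
that keeps the determinant, clears the last column above the corner and turns the corner entry
into `s + 1 + r`. What remains is lower triangular with diagonal `1, …, 1, r + s + 1`. -/

/-- Indices `p` and `q` lie in the same block of the partition of `{0, …, N-1}` into
`r` consecutive blocks of sizes `h 0, …, h (r-1)`. -/
def sameBlock {r : ℕ} (h : Fin r → ℕ) (p q : ℕ) : Prop :=
  ∃ i : Fin r,
    (∑ i' ∈ Finset.univ.filter (fun i' : Fin r => i' < i), h i') ≤ p ∧
    p < (∑ i' ∈ Finset.univ.filter (fun i' : Fin r => i' < i), h i') + h i ∧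
    (∑ i' ∈ Finset.univ.filter (fun i' : Fin r => i' < i), h i') ≤ q ∧
    q < (∑ i' ∈ Finset.univ.filter (fun i' : Fin r => i' < i), h i') + h i

open scoped Classical in
/-- The `(N+1) × (N+1)` integer matrix with diagonal blocks `L_{h i}` (lower-triangular
all-ones) in the first `N` rows/columns, last column all `1`'s above the corner, last row
all `-1`'s left of the corner, and corner entry `s + 1`. -/
noncomputable def starMatrix (r s N : ℕ) (h : Fin r → ℕ) :
    Matrix (Fin (N + 1)) (Fin (N + 1)) ℤ :=
  Matrix.of fun p q =>
    if (p : ℕ) < N then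
      if (q : ℕ) < N then
        if sameBlock h (p : ℕ) (q : ℕ) ∧ (q : ℕ) ≤ (p : ℕ) then 1 else 0
      else 1
    else
      if (q : ℕ) < N then -1 else (s : ℤ) + 1

open Finset Matrix

theorem Matrix.det_updateCol_mulVec {n R : Type*} [Fintype n] [DecidableEq n] [CommRing R]
    (M : Matrix n n R) (j : n) (v : n → R) : (M.updateCol j (M *ᵥ v)).det = v j * M.det := by
  rw [← smul_eq_mul, ← M.det_updateCol_sum j v]
  congr 2 with k
  simp only [mulVec, dotProduct, smul_eq_mul, mul_comm]

namespace StarMatrix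

variable {r : ℕ} (h : Fin r → ℕ)

def blockStart (i : Fin r) : ℕ := ∑ j ∈ univ.filter (· < i), h j

def InBlock (i : Fin r) (p : ℕ) : Prop := blockStart h i ≤ p ∧ p < blockStart h i + h i

theorem sameBlock_iff {p q : ℕ} : sameBlock h p q ↔ ∃ i, InBlock h i p ∧ InBlock h i q := by
  simp only [sameBlock, InBlock, blockStart, and_assoc]

variable {h}

theorem blockStart_add_eq_sum (i : Fin r) :
    blockStart h i + h i = ∑ j ∈ insert i (univ.filter (· < i)), h j := by
  rw [blockStart, add_comm, sum_insert (by simp)]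

theorem blockStart_add_le {i j : Fin r} (hij : i < j) : blockStart h i + h i ≤ blockStart h j := by
  rw [blockStart_add_eq_sum]
  refine sum_le_sum_of_subset fun k hk => ?_
  simp only [mem_insert, mem_filter, mem_univ, true_and] at hk ⊢
  rcases hk with rfl | hk
  · exact hij
  · exact hk.trans hij

theorem blockStart_add_le_sum (i : Fin r) : blockStart h i + h i ≤ ∑ j, h j := by
  rw [blockStart_add_eq_sum]
  exact sum_le_sum_of_subset (subset_univ _)

theorem blockStart_eq_sum_castLE (i : Fin r) :
    blockStart h i = ∑ j : Fin i, h (Fin.castLE i.2.le j) := by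
  have : univ.filter (· < i) = univ.map (Fin.castLEEmb i.2.le) := by
    ext k
    simp only [mem_filter, mem_univ, true_and, mem_map, Fin.coe_castLEEmb]
    exact ⟨fun hk => ⟨⟨k, hk⟩, rfl⟩, by rintro ⟨a, rfl⟩; exact a.2⟩
  rw [blockStart, this, sum_map]
  rfl

theorem InBlock.unique {i j : Fin r} {p : ℕ} (hi : InBlock h i p) (hj : InBlock h j p) :
    i = j := by
  rcases lt_trichotomy i j with hij | rfl | hji
  · have := blockStart_add_le (h := h) hij
    unfold InBlock at hi hj
    omega
  · rfl
  · have := blockStart_add_le (h := h) hji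
    unfold InBlock at hi hj
    omega

theorem exists_inBlock {p : ℕ} (hp : p < ∑ i, h i) : ∃ i, InBlock h i p := by
  obtain ⟨⟨i, k⟩, hik⟩ := finSigmaFinEquiv.surjective (⟨p, hp⟩ : Fin (∑ i, h i))
  have hpik : p = blockStart h i + k := by
    rw [blockStart_eq_sum_castLE, ← finSigmaFinEquiv_apply ⟨i, k⟩, hik]
  exact ⟨i, by omega, by omega⟩

theorem inBlock_blockStart {i : Fin r} (hi : 0 < h i) : InBlock h i (blockStart h i) :=
  ⟨le_rfl, by omega⟩

theorem sameBlock_self {p : ℕ} (hp : p < ∑ i, h i) : sameBlock h p p := by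
  obtain ⟨i, hi⟩ := exists_inBlock hp
  exact (sameBlock_iff h).2 ⟨i, hi, hi⟩

theorem sameBlock_blockStart_iff (hh : ∀ i, 0 < h i) {p : ℕ} {i : Fin r} :
    sameBlock h p (blockStart h i) ∧ blockStart h i ≤ p ↔ InBlock h i p := by
  constructor
  · rintro ⟨hs, -⟩
    obtain ⟨j, hjp, hji⟩ := (sameBlock_iff h).1 hs
    rwa [hji.unique (inBlock_blockStart (hh i))] at hjp
  · intro hip
    exact ⟨(sameBlock_iff h).2 ⟨i, hip, inBlock_blockStart (by unfold InBlock at hip; omega)⟩,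
      hip.1⟩

open scoped Classical in
theorem sum_ite_inBlock {p : ℕ} (hp : p < ∑ i, h i) :
    ∑ i, (if InBlock h i p then (1 : ℤ) else 0) = 1 := by
  obtain ⟨i, hi⟩ := exists_inBlock hp
  rw [Fintype.sum_eq_single i fun j hj => if_neg fun hjp => hj (hjp.unique hi), if_pos hi]

theorem blockStart_lt_sum (hh : ∀ i, 0 < h i) (i : Fin r) : blockStart h i < ∑ j, h j := by
  have := blockStart_add_le_sum (h := h) i
  have := hh i
  omega

variable (h)

def blockStartFin (i : Fin r) : Fin (∑ j, h j + 1) :=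
  ⟨blockStart h i, Nat.lt_succ_of_le ((Nat.le_add_right _ _).trans (blockStart_add_le_sum i))⟩

def columnReduction : Fin (∑ j, h j + 1) → ℤ :=
  Pi.single (Fin.last _) 1 - ∑ i, Pi.single (blockStartFin h i) 1

variable {h}

theorem columnReduction_last (hh : ∀ i, 0 < h i) : columnReduction h (Fin.last _) = 1 := by
  have hne (i : Fin r) : Fin.last _ ≠ blockStartFin h i :=
    Fin.ne_of_val_ne (blockStart_lt_sum hh i).ne'
  simp [columnReduction, hne]

theorem starMatrix_mulVec_columnReduction (s : ℕ) (hh : ∀ i, 0 < h i) :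
    starMatrix r s (∑ i, h i) h *ᵥ columnReduction h = Pi.single (Fin.last _) ((r : ℤ) + s + 1) := by
  ext p
  simp only [columnReduction, mulVec_sub, mulVec_sum, mulVec_single_one, Pi.sub_apply,
    Finset.sum_apply, col_apply]
  induction p using Fin.lastCases with
  | last =>
    simp [starMatrix, blockStartFin, blockStart_lt_sum hh, add_comm, add_assoc]
  | cast p =>
    classical
    have hstart (i : Fin r) : starMatrix r s (∑ i, h i) h p.castSucc (blockStartFin h i) =
        if InBlock h i p then 1 else 0 := by
      simp only [starMatrix, blockStartFin, of_apply, Fin.val_castSucc, p.2, blockStart_lt_sum hh,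
        if_true]
      exact if_congr (sameBlock_blockStart_iff hh) rfl rfl
    simp only [hstart, sum_ite_inBlock p.2]
    simp [starMatrix]

theorem det_starMatrix_updateCol_last (s : ℕ) (c : ℤ) :
    ((starMatrix r s (∑ i, h i) h).updateCol (Fin.last _) (Pi.single (Fin.last _) c)).det = c := by
  rw [det_of_isLowerTriangular _ ?_, Fin.prod_univ_castSucc]
  · simp [starMatrix, sameBlock_self]
  · intro p q hpq
    induction q using Fin.lastCases with
    | last =>
      rw [updateCol_self]
      exact Pi.single_eq_of_ne (Fin.ne_last_of_lt hpq) _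
    | cast q =>
      have hpq : (p : ℕ) < q := hpq
      have hp : (p : ℕ) < ∑ i, h i := hpq.trans q.2
      simp [starMatrix, hp, not_le.2 hpq]

end StarMatrix

open StarMatrix

theorem starMatrix_det_general (r s : ℕ) (h : Fin r → ℕ) (hh : ∀ i, 1 ≤ h i)
    (N : ℕ) (hN : N = ∑ i, h i) :
    (starMatrix r s N h).det = (r : ℤ) + s + 1 := by
  subst hN
  have hcol := Matrix.det_updateCol_mulVec (starMatrix r s _ h) (Fin.last _) (columnReduction h)
  rwa [starMatrix_mulVec_columnReduction s hh, det_starMatrix_updateCol_last,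
    columnReduction_last hh, one_mul, eq_comm] at hcol

theorem starMatrix_det (r s : ℕ) (hr : 1 ≤ r) (h : Fin r → ℕ) (hh : ∀ i, 1 ≤ h i)
    (N : ℕ) (hN : N = ∑ i, h i) :
    (starMatrix r s N h).det = (r : ℤ) + s + 1 :=
  starMatrix_det_general r s h hh N hN
end

section
/- Let D be a strongly connected tournament on a finite vertex type V with |V| = n, let k ≥ 2, let σ : Fin n ≃ V be an ordering of the vertices, and suppose the feedback arc set S = S(σ) is minimum (|S(σ)| ≤ |S(τ)| for every ordering τ) and the subdigraph D_S arc-induced by S is an (s,t)-directed star for some s, t ≥ 1. Let m be the number of feedback intervals of S with respect to σ. Then D is k-Always Winnable if and only if gcd(k, m) = 1. -/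
open scoped Classical

/-- `v` is a tail feedback vertex: it is the tail of some arc of the feedback arc set. -/
def isTailFeedback {V : Type*} [Fintype V] (adj : V → V → Prop)
    {n : ℕ} (σ : Fin n ≃ V) (v : V) : Prop :=
  ∃ w : V, (v, w) ∈ feedbackArcSet adj σ

/-- The positions `i ≤ j` delimit a head feedback interval: all of
`σ i, σ (i+1), …, σ j` are head feedback vertices, and the neighbors `σ (i-1)` and
`σ (j+1)`, when they exist, are not. -/
def isHeadInterval {V : Type*} [Fintype V] (adj : V → V → Prop)
    {n : ℕ} (σ : Fin n ≃ V) (i j : Fin n) : Prop :=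
  i ≤ j ∧ (∀ t : Fin n, i ≤ t → t ≤ j → isHeadFeedback adj σ (σ t)) ∧
    (∀ i' : Fin n, (i' : ℕ) + 1 = (i : ℕ) → ¬ isHeadFeedback adj σ (σ i')) ∧
    (∀ j' : Fin n, (j' : ℕ) = (j : ℕ) + 1 → ¬ isHeadFeedback adj σ (σ j'))

/-- The positions `i ≤ j` delimit a tail feedback interval: all of
`σ i, σ (i+1), …, σ j` are tail feedback vertices, and the neighbors `σ (i-1)` and
`σ (j+1)`, when they exist, are not. -/
def isTailInterval {V : Type*} [Fintype V] (adj : V → V → Prop)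
    {n : ℕ} (σ : Fin n ≃ V) (i j : Fin n) : Prop :=
  i ≤ j ∧ (∀ t : Fin n, i ≤ t → t ≤ j → isTailFeedback adj σ (σ t)) ∧
    (∀ i' : Fin n, (i' : ℕ) + 1 = (i : ℕ) → ¬ isTailFeedback adj σ (σ i')) ∧
    (∀ j' : Fin n, (j' : ℕ) = (j : ℕ) + 1 → ¬ isTailFeedback adj σ (σ j'))

/-- The number of feedback intervals (head feedback intervals or tail feedback intervals,
an interval that is both being counted once), each interval being recorded by the pair of
positions of its endpoints in the ordering `σ`. -/
noncomputable def numFeedbackIntervals {V : Type*} [Fintype V] (adj : V → V → Prop)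
    {n : ℕ} (σ : Fin n ≃ V) : ℕ :=
  (Finset.univ.filter fun p : Fin n × Fin n =>
    isHeadInterval adj σ p.1 p.2 ∨ isTailInterval adj σ p.1 p.2).card

/-!
Read a toggle vector along the ordering `σ` as `y : Fin n → R`. Apart from the star, every
vertex is dominated exactly by its predecessors, so the toggle equation at position `i` is
`∑ j ≤ i, y j = 0` corrected at the centre `p` of the star and at the sets `A`, `B` of
positions of its tails and heads. Minimality of `σ` forbids a back arc between consecutive
positions, so `A` lies beyond `p + 1` and `B` before `p - 1`. Hence the prefix sums of a kernel
vector are `z` on `A`, `-z` on `B`, `-w` at `p` and `0` elsewhere, where `z = y p` and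
`w = ∑ A, y - ∑ B, y`. Differencing gives `∑ A, y = r_A z`, `∑ B, y = -r_B z` and `y p = -w`,
with `r_A`, `r_B` the numbers of runs of consecutive positions in `A` and `B`, so
`(r_A + r_B + 1) z = 0`; conversely every such `z` yields a kernel vector. The feedback
intervals are the runs of `A`, the runs of `B`, and `{p}`, so `m = r_A + r_B + 1`, and the
toggle map on `(ZMod k)^V` is bijective iff `m` is a non-zero-divisor mod `k`.
-/

open Finset

section PrefixSum

variable {R : Type*} [CommRing R] {n : ℕ}

theorem bijective_sum_Iic :
    Function.Bijective fun (y : Fin n → R) (i : Fin n) => ∑ j ∈ Iic i, y j := by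
  set L : Matrix (Fin n) (Fin n) R := Matrix.of fun i j => if j ≤ i then 1 else 0
  have hL : (fun (y : Fin n → R) (i : Fin n) => ∑ j ∈ Iic i, y j) = L.mulVec := by
    ext y i
    simp [L, Matrix.mulVec, dotProduct, ← sum_filter, filter_ge_eq_Iic]
  have hunit : IsUnit L := by
    rw [Matrix.isUnit_iff_isUnit_det, Matrix.det_of_isLowerTriangular]
    · simp [L]
    · intro i j hij
      simp [L, not_le.2 (OrderDual.toDual_lt_toDual.1 hij)]
  rw [hL]
  exact ⟨Matrix.mulVec_injective_of_isUnit hunit, Matrix.mulVec_surjective_iff_isUnit.2 hunit⟩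

theorem apply_eq_sum_Iic_sub (y : Fin n → R) (i : Fin n) :
    ((i : ℕ) = 0 ∧ y i = ∑ t ∈ Iic i, y t) ∨
      ∃ j : Fin n, (j : ℕ) + 1 = i ∧ y i = ∑ t ∈ Iic i, y t - ∑ t ∈ Iic j, y t := by
  rw [← Iio_insert, sum_insert notMem_Iio_self]
  rcases Nat.eq_zero_or_eq_succ_pred (i : ℕ) with h0 | hsucc
  · left
    have : Iio i = ∅ := by
      ext j; simp only [mem_Iio, Fin.lt_def, notMem_empty, iff_false]; omega
    simp [h0, this]
  · right
    refine ⟨⟨(i : ℕ) - 1, by omega⟩, by simp only; omega, ?_⟩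
    have : Iio i = Iic (⟨(i : ℕ) - 1, by omega⟩ : Fin n) := by
      ext j; simp only [mem_Iio, mem_Iic, Fin.lt_def, Fin.le_def]; omega
    rw [this]; ring

end PrefixSum

section Runs

variable {n : ℕ}

/-- `isHeadInterval adj σ` and `isTailInterval adj σ` are, by definition, `IsRun` of the
positions of head and tail feedback vertices. -/
def IsRun (X : Fin n → Prop) (i j : Fin n) : Prop :=
  i ≤ j ∧ (∀ t : Fin n, i ≤ t → t ≤ j → X t) ∧
    (∀ i' : Fin n, (i' : ℕ) + 1 = (i : ℕ) → ¬ X i') ∧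
    (∀ j' : Fin n, (j' : ℕ) = (j : ℕ) + 1 → ¬ X j')

def IsRunStart (X : Fin n → Prop) (i : Fin n) : Prop :=
  X i ∧ ∀ i' : Fin n, (i' : ℕ) + 1 = (i : ℕ) → ¬ X i'

variable {X : Fin n → Prop} {i j j' : Fin n}

theorem IsRun.isRunStart (h : IsRun X i j) : IsRunStart X i :=
  ⟨h.2.1 i le_rfl h.1, h.2.2.1⟩

theorem IsRun.right_unique (h : IsRun X i j) (h' : IsRun X i j') : j = j' := by
  by_contra hne
  wlog hlt : j < j' generalizing j j'
  · exact this h' h (Ne.symm hne) (lt_of_le_of_ne (not_lt.1 hlt) (Ne.symm hne))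
  have hj : (j : ℕ) + 1 < n := lt_of_le_of_lt (Fin.lt_def.1 hlt) j'.2
  exact h.2.2.2 ⟨j + 1, hj⟩ rfl <|
    h'.2.1 _ (h.1.trans (Fin.le_def.2 (by simp))) (Fin.le_def.2 (by simpa using hlt))

theorem IsRunStart.exists_isRun (h : IsRunStart X i) : ∃ j, IsRun X i j := by
  let C : Finset (Fin n) := {j | i ≤ j ∧ ∀ t : Fin n, i ≤ t → t ≤ j → X t}
  have hiC : i ∈ C := by
    simp only [C, mem_filter, mem_univ, true_and]
    exact ⟨le_rfl, fun t h1 h2 => le_antisymm h2 h1 ▸ h.1⟩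
  obtain ⟨j, hjC, hjmax⟩ : ∃ j ∈ C, ∀ j' ∈ C, j' ≤ j :=
    ⟨C.max' ⟨i, hiC⟩, C.max'_mem _, fun j' hj' => C.le_max' j' hj'⟩
  simp only [C, mem_filter, mem_univ, true_and] at hjC hjmax
  refine ⟨j, hjC.1, hjC.2, h.2, fun j' hj' hXj' => ?_⟩
  have := Fin.le_def.1 <| hjmax j' ⟨hjC.1.trans (Fin.le_def.2 (by omega)), fun t h1 h2 => by
    rcases (Fin.le_def.1 h2).lt_or_eq with hlt | heq
    · exact hjC.2 t h1 (Fin.le_def.2 (by omega))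
    · exact Fin.ext heq ▸ hXj'⟩
  omega

theorem card_isRun (X : Fin n → Prop) :
    #{q : Fin n × Fin n | IsRun X q.1 q.2} = #{i | IsRunStart X i} := by
  apply card_nbij Prod.fst
  · intro q hq
    simp only [coe_filter, mem_univ, true_and, Set.mem_ofPred_eq] at hq ⊢
    exact hq.isRunStart
  · intro q hq q' hq' heq
    simp only [coe_filter, mem_univ, true_and, Set.mem_ofPred_eq] at hq hq'
    exact Prod.ext heq (hq.right_unique (heq ▸ hq'))
  · intro i hi
    simp only [coe_filter, mem_univ, true_and, Set.mem_ofPred_eq] at hi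
    obtain ⟨j, hj⟩ := hi.exists_isRun
    exact ⟨(i, j), by simpa using hj, rfl⟩

theorem isRun_self_or (p : Fin n) (hX : ∀ x, X x → (x : ℕ) + 1 < p ∨ (p : ℕ) + 1 < x) :
    IsRun (fun t => t = p ∨ X t) p p := by
  refine ⟨le_rfl, fun t h1 h2 => Or.inl (le_antisymm h2 h1), ?_, ?_⟩ <;>
  · rintro t ht (rfl | h)
    · omega
    · have := hX t h; omega

theorem card_isRunStart_eq_or (p : Fin n)
    (hX : ∀ x, X x → (x : ℕ) + 1 < p ∨ (p : ℕ) + 1 < x) :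
    #{i | IsRunStart (fun t => t = p ∨ X t) i} = #{i | IsRunStart X i} + 1 := by
  have hpX : ¬ X p := fun h => by have := hX p h; omega
  have : univ.filter (IsRunStart fun t => t = p ∨ X t) =
      insert p (univ.filter (IsRunStart X)) := by
    ext i
    simp only [IsRunStart, mem_insert, mem_filter, mem_univ, true_and, not_or]
    by_cases hip : i = p
    · subst hip
      simp only [true_and, hpX, false_and, or_false, iff_true]
      exact fun i' hi' => ⟨fun h => by subst h; omega, fun h => by have := hX i' h; omega⟩
    · simp only [hip, false_or]
      refine and_congr_right fun hXi => forall_congr' fun i' => imp_congr_right fun hi' =>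
        and_iff_right fun h => ?_
      subst h
      have := hX i hXi
      omega
  rw [this, card_insert_of_notMem]
  simp [IsRunStart, hpX]

theorem card_isRun_or_isRun (p : Fin n) {X Y : Fin n → Prop}
    (hX : ∀ x, X x → (x : ℕ) + 1 < p) (hY : ∀ y, Y y → (p : ℕ) + 1 < y) :
    #{q : Fin n × Fin n |
        IsRun (fun t => t = p ∨ X t) q.1 q.2 ∨ IsRun (fun t => t = p ∨ Y t) q.1 q.2} =
      #{i | IsRunStart X i} + #{i | IsRunStart Y i} + 1 := by
  have hboth : univ.filter (fun q : Fin n × Fin n =>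
      IsRun (fun t => t = p ∨ X t) q.1 q.2 ∧ IsRun (fun t => t = p ∨ Y t) q.1 q.2) =
        {(p, p)} := by
    ext ⟨i, j⟩
    simp only [mem_filter, mem_univ, true_and, mem_singleton, Prod.mk.injEq]
    constructor
    · rintro ⟨hX', hY'⟩
      have key : ∀ t, i ≤ t → t ≤ j → t = p := fun t h1 h2 => by
        rcases hX'.2.1 t h1 h2 with h | h <;> rcases hY'.2.1 t h1 h2 with h' | h'
        all_goals first | assumption | (have := hX t h; have := hY t h'; omega)
      exact ⟨key i le_rfl hX'.1, key j hX'.1 le_rfl⟩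
    · rintro ⟨hi, hj⟩
      rw [hi, hj]
      exact ⟨isRun_self_or p fun x hx => Or.inl (hX x hx),
        isRun_self_or p fun y hy => Or.inr (hY y hy)⟩
  have := card_union_add_card_inter
    (univ.filter fun q : Fin n × Fin n => IsRun (fun t => t = p ∨ X t) q.1 q.2)
    (univ.filter fun q : Fin n × Fin n => IsRun (fun t => t = p ∨ Y t) q.1 q.2)
  rw [← filter_or, ← filter_and, hboth, card_isRun, card_isRun,
    card_isRunStart_eq_or p fun x hx => Or.inl (hX x hx),
    card_isRunStart_eq_or p fun y hy => Or.inr (hY y hy), card_singleton] at this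
  omega

end Runs

section StarToggle

variable {R : Type*} [CommRing R] {n : ℕ}

theorem sum_eq_card_isRunStart_smul (X : Finset (Fin n)) {y : Fin n → R} {z : R}
    (hy : ∀ i, (i ∈ X ∨ ∃ x ∈ X, (i : ℕ) + 1 = x) → ∑ t ∈ Iic i, y t = if i ∈ X then z else 0) :
    ∑ x ∈ X, y x = #{i | IsRunStart (· ∈ X) i} • z := by
  have hrun : ∀ x ∈ X, y x = if IsRunStart (· ∈ X) x then z else 0 := by
    intro x hx
    rcases apply_eq_sum_Iic_sub y x with ⟨h0, hyx⟩ | ⟨j, hj, hyx⟩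
    · rw [hyx, hy x (Or.inl hx), if_pos hx, if_pos ⟨hx, fun i' hi' => by omega⟩]
    · have hstart : IsRunStart (· ∈ X) x ↔ j ∉ X :=
        ⟨fun h => h.2 j hj, fun h => ⟨hx, fun i' hi' => Fin.ext (by omega : (i' : ℕ) = j) ▸ h⟩⟩
      rw [hyx, hy x (Or.inl hx), hy j (Or.inr ⟨x, hx, hj⟩), if_pos hx]
      by_cases hjX : j ∈ X <;> simp [hjX, hstart]
  rw [sum_congr rfl hrun, ← sum_filter, sum_const]
  congr 2
  ext i
  simp only [mem_filter, mem_univ, true_and, and_iff_right_iff_imp]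
  exact And.left

variable (p : Fin n) (A B : Finset (Fin n))

def starToggle (y : Fin n → R) (i : Fin n) : R :=
  ∑ j ∈ Iic i, y j + (if i = p then ∑ a ∈ A, y a - ∑ b ∈ B, y b else 0) +
    (if i ∈ B then y p else 0) - (if i ∈ A then y p else 0)

variable {p A B}

theorem sums_of_sum_Iic_eq (hA : ∀ a ∈ A, (p : ℕ) + 1 < a) (hB : ∀ b ∈ B, (b : ℕ) + 1 < p)
    {y : Fin n → R} {z c : R}
    (hy : ∀ i, ∑ t ∈ Iic i, y t =
      (if i ∈ A then z else 0) - (if i ∈ B then z else 0) + (if i = p then c else 0)) :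
    y p = c ∧ ∑ a ∈ A, y a = #{i | IsRunStart (· ∈ A) i} • z ∧
      ∑ b ∈ B, y b = #{i | IsRunStart (· ∈ B) i} • (-z) := by
  have hpA : p ∉ A := fun h => by have := hA p h; omega
  have hpB : p ∉ B := fun h => by have := hB p h; omega
  refine ⟨?_, sum_eq_card_isRunStart_smul A fun i hi => ?_,
    sum_eq_card_isRunStart_smul B fun i hi => ?_⟩
  · rcases apply_eq_sum_Iic_sub y p with ⟨-, hyp⟩ | ⟨j, hj, hyp⟩
    · simp [hyp, hy, hpA, hpB]
    · have hjA : j ∉ A := fun h => by have := hA j h; omega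
      have hjB : j ∉ B := fun h => by have := hB j h; omega
      have hjp : j ≠ p := fun h => by subst h; omega
      simp [hyp, hy, hpA, hpB, hjA, hjB, hjp]
  · have hpi : (p : ℕ) < i := by
      rcases hi with hi | ⟨a, ha, hia⟩
      · have := hA i hi; omega
      · have := hA a ha; omega
    have hiB : i ∉ B := fun h => by have := hB i h; omega
    have hip : i ≠ p := fun h => by subst h; omega
    simp [hy, hiB, hip]
  · have hip' : (i : ℕ) + 1 < p := by
      rcases hi with hi | ⟨b, hb, hib⟩
      · exact hB i hi
      · have := hB b hb; omega
    have hiA : i ∉ A := fun h => by have := hA i h; omega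
    have hip : i ≠ p := fun h => by subst h; omega
    by_cases hiB : i ∈ B <;> simp [hy, hiA, hiB, hip]

theorem starToggle_eq_zero_imp_iff (hA : ∀ a ∈ A, (p : ℕ) + 1 < a)
    (hB : ∀ b ∈ B, (b : ℕ) + 1 < p) :
    (∀ y : Fin n → R, starToggle p A B y = 0 → y = 0) ↔
      ((#{i | IsRunStart (· ∈ A) i} + #{i | IsRunStart (· ∈ B) i} + 1 : ℕ) : R) ∈
        nonZeroDivisors R := by
  have hpA : p ∉ A := fun h => by have := hA p h; omega
  have hpB : p ∉ B := fun h => by have := hB p h; omega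
  rw [mem_nonZeroDivisors_iff_left]
  constructor
  · intro hker z hz
    obtain ⟨y, hy⟩ := (bijective_sum_Iic (R := R) (n := n)).2 fun i =>
      (if i ∈ A then z else 0) - (if i ∈ B then z else 0) + (if i = p then z else 0)
    obtain ⟨hyp, hsA, hsB⟩ := sums_of_sum_Iic_eq hA hB (congrFun hy)
    have hy0 : starToggle p A B y = 0 := by
      ext i
      simp only [starToggle, congrFun hy i, hsA, hsB, hyp, nsmul_eq_mul, Pi.zero_apply]
      push_cast at hz
      by_cases hip : i = p
      · subst hip
        simp only [hpA, hpB, if_true, if_false]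
        linear_combination hz
      · simp only [hip, if_false]
        split_ifs <;> ring
    rw [← hyp, hker y hy0, Pi.zero_apply]
  · intro hm y hy
    obtain ⟨w, hw⟩ : ∃ w, w = ∑ a ∈ A, y a - ∑ b ∈ B, y b := ⟨_, rfl⟩
    have hsum : ∀ i, ∑ t ∈ Iic i, y t =
        (if i ∈ A then y p else 0) - (if i ∈ B then y p else 0) + (if i = p then -w else 0) := by
      intro i
      have := congrFun hy i
      simp only [starToggle, Pi.zero_apply, ← hw] at this
      split_ifs at this ⊢ <;> linear_combination this
    obtain ⟨hyp, hsA, hsB⟩ := sums_of_sum_Iic_eq hA hB hsum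
    have hz : y p = 0 := hm (y p) <| by
      rw [hsA, hsB, nsmul_eq_mul, nsmul_eq_mul] at hw
      push_cast
      linear_combination hyp - hw
    have hw0 : w = 0 := by linear_combination hyp - hz
    apply (bijective_sum_Iic (R := R) (n := n)).1
    ext i
    simp [hsum, hz, hw0]

end StarToggle

section Tournament

variable {V : Type*} [Fintype V] (adj : V → V → Prop)

noncomputable def toggleMap (R : Type*) [CommRing R] : (V → R) →+ (V → R) where
  toFun x v := x v + ∑ u ∈ univ.filter (fun u => adj u v), x u
  map_zero' := by ext; simp
  map_add' x y := by ext v; simp only [Pi.add_apply, sum_add_distrib]; ring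

theorem kAW_iff_surjective_toggleMap (k : ℕ) :
    kAW adj k ↔ Function.Surjective (toggleMap adj (ZMod k)) := by
  refine ⟨fun h b => ?_, fun h lam => ?_⟩
  · obtain ⟨x, hx⟩ := h (-b)
    exact ⟨x, funext fun v => by
      have := hx v
      simp only [toggleMap, AddMonoidHom.coe_mk, ZeroHom.coe_mk, Pi.neg_apply] at this ⊢
      linear_combination this⟩
  · obtain ⟨x, hx⟩ := h (-lam)
    exact ⟨x, fun v => by
      have := congrFun hx v
      simp only [toggleMap, AddMonoidHom.coe_mk, ZeroHom.coe_mk, Pi.neg_apply] at this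
      linear_combination this⟩

theorem kAW_iff_toggleMap_eq_zero_imp (k : ℕ) [NeZero k] :
    kAW adj k ↔ ∀ x, toggleMap adj (ZMod k) x = 0 → x = 0 := by
  rw [kAW_iff_surjective_toggleMap, ← Finite.injective_iff_surjective, injective_iff_map_eq_zero]

variable {adj} {n : ℕ} (σ : Fin n ≃ V)

theorem mem_feedbackArcSet_iff {i j : Fin n} :
    (σ j, σ i) ∈ feedbackArcSet adj σ ↔ adj (σ j) (σ i) ∧ i < j := by
  simp [feedbackArcSet]

theorem sum_adj_eq (hirr : ∀ v, ¬ adj v v) (htour : ∀ u v, u ≠ v → (adj u v ↔ ¬ adj v u))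
    {R : Type*} [CommRing R] (y : Fin n → R) (i : Fin n) :
    ∑ j ∈ univ.filter (fun j => adj (σ j) (σ i)), y j =
      ∑ j ∈ Iio i, y j + ∑ j ∈ univ.filter (fun j => (σ j, σ i) ∈ feedbackArcSet adj σ), y j -
        ∑ j ∈ univ.filter (fun j => (σ i, σ j) ∈ feedbackArcSet adj σ), y j := by
  rw [← filter_gt_eq_Iio]
  simp only [sum_filter, ← sum_add_distrib, ← sum_sub_distrib, mem_feedbackArcSet_iff]
  refine sum_congr rfl fun j _ => ?_
  rcases lt_trichotomy j i with h | rfl | h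
  · have := htour (σ j) (σ i) (σ.injective.ne h.ne)
    by_cases hji : adj (σ j) (σ i) <;> simp_all [lt_asymm h]
  · simp [hirr]
  · simp [h, lt_asymm h]

theorem not_adj_of_val_eq_succ (htour : ∀ u v, u ≠ v → (adj u v ↔ ¬ adj v u))
    (hmin : ∀ τ : Fin n ≃ V, #(feedbackArcSet adj σ) ≤ #(feedbackArcSet adj τ))
    {q r : Fin n} (hqr : (r : ℕ) = q + 1) : ¬ adj (σ r) (σ q) := by
  intro hrq
  have hqr' : q ≠ r := fun h => by subst h; omega
  have hqr_not : ¬ adj (σ q) (σ r) := fun h => (htour _ _ (σ.injective.ne hqr')).1 h hrq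
  -- swapping the adjacent positions `q`, `r` reverses only the back arc `σ r → σ q`
  set τ := (Equiv.swap q r).trans σ
  have hτ : ∀ v, τ.symm v = Equiv.swap q r (σ.symm v) := fun v => by simp [τ]
  have hsub : feedbackArcSet adj τ ⊆ (feedbackArcSet adj σ).erase (σ r, σ q) := by
    rintro ⟨u, w⟩ huw
    obtain ⟨b, rfl⟩ := σ.surjective u
    obtain ⟨a, rfl⟩ := σ.surjective w
    simp only [feedbackArcSet, mem_filter, mem_univ, true_and, mem_erase, ne_eq, Prod.mk.injEq,
      hτ, Equiv.symm_apply_apply, σ.injective.eq_iff] at huw ⊢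
    obtain ⟨hadj, hlt⟩ := huw
    have hba : ¬ (b = q ∧ a = r) := fun ⟨hb, ha⟩ => hqr_not (hb ▸ ha ▸ hadj)
    rw [Equiv.swap_apply_def, Equiv.swap_apply_def] at hlt
    refine ⟨?_, hadj, ?_⟩ <;> simp only [Fin.lt_def, Fin.ext_iff] at * <;> split_ifs at hlt <;>
      omega
  have hmem : (σ r, σ q) ∈ feedbackArcSet adj σ :=
    (mem_feedbackArcSet_iff σ).2 ⟨hrq, Fin.lt_def.2 (by omega)⟩
  exact (hmin τ).not_gt ((card_le_card hsub).trans_lt (card_erase_lt_of_mem hmem))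

end Tournament

section Star

variable {V : Type*} [Fintype V] {adj : V → V → Prop} {n : ℕ} {σ : Fin n ≃ V}

def IsStarFeedback (adj : V → V → Prop) (σ : Fin n ≃ V) (p : Fin n) (A B : Finset (Fin n)) :
    Prop :=
  ∀ i j, (σ j, σ i) ∈ feedbackArcSet adj σ ↔ (j ∈ A ∧ i = p) ∨ (j = p ∧ i ∈ B)

theorem exists_isStarFeedback {ι κ : Type*} [Nonempty ι] [Nonempty κ] {c : V} {f : ι → V}
    {g : κ → V}
    (h : ∀ u w, (u, w) ∈ feedbackArcSet adj σ ↔ (∃ i, u = f i ∧ w = c) ∨ (u = c ∧ ∃ j, w = g j)) :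
    ∃ p A B, IsStarFeedback adj σ p A B ∧ A.Nonempty ∧ B.Nonempty := by
  refine ⟨σ.symm c, univ.filter fun j => ∃ i, σ j = f i, univ.filter fun j => ∃ i, σ j = g i,
    fun i j => ?_,
    ⟨σ.symm (f (Classical.arbitrary ι)), by simp⟩, ⟨σ.symm (g (Classical.arbitrary κ)), by simp⟩⟩
  simp only [h, mem_filter, mem_univ, true_and, Equiv.eq_symm_apply, exists_and_right]

variable {p : Fin n} {A B : Finset (Fin n)}

theorem IsStarFeedback.notMem_left (h : IsStarFeedback adj σ p A B) : p ∉ A := fun hp =>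
  lt_irrefl p ((mem_feedbackArcSet_iff σ).1 ((h p p).2 (Or.inl ⟨hp, rfl⟩))).2

theorem IsStarFeedback.notMem_right (h : IsStarFeedback adj σ p A B) : p ∉ B := fun hp =>
  lt_irrefl p ((mem_feedbackArcSet_iff σ).1 ((h p p).2 (Or.inr ⟨rfl, hp⟩))).2

theorem IsStarFeedback.succ_lt_of_mem_left (h : IsStarFeedback adj σ p A B)
    (htour : ∀ u v, u ≠ v → (adj u v ↔ ¬ adj v u))
    (hmin : ∀ τ : Fin n ≃ V, #(feedbackArcSet adj σ) ≤ #(feedbackArcSet adj τ)) {a : Fin n}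
    (ha : a ∈ A) : (p : ℕ) + 1 < a := by
  obtain ⟨hadj, hlt⟩ := (mem_feedbackArcSet_iff σ).1 ((h p a).2 (Or.inl ⟨ha, rfl⟩))
  have := Fin.lt_def.1 hlt
  have : (a : ℕ) ≠ p + 1 := fun hval => not_adj_of_val_eq_succ σ htour hmin hval hadj
  omega

theorem IsStarFeedback.succ_lt_of_mem_right (h : IsStarFeedback adj σ p A B)
    (htour : ∀ u v, u ≠ v → (adj u v ↔ ¬ adj v u))
    (hmin : ∀ τ : Fin n ≃ V, #(feedbackArcSet adj σ) ≤ #(feedbackArcSet adj τ)) {b : Fin n}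
    (hb : b ∈ B) : (b : ℕ) + 1 < p := by
  obtain ⟨hadj, hlt⟩ := (mem_feedbackArcSet_iff σ).1 ((h b p).2 (Or.inr ⟨rfl, hb⟩))
  have := Fin.lt_def.1 hlt
  have : (p : ℕ) ≠ b + 1 := fun hval => not_adj_of_val_eq_succ σ htour hmin hval hadj
  omega

theorem IsStarFeedback.sum_feedback_into {R : Type*} [CommRing R]
    (h : IsStarFeedback adj σ p A B)
    (y : Fin n → R) (i : Fin n) :
    ∑ j ∈ univ.filter (fun j => (σ j, σ i) ∈ feedbackArcSet adj σ), y j =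
      (if i = p then ∑ a ∈ A, y a else 0) + (if i ∈ B then y p else 0) := by
  by_cases hip : i = p
  · subst hip
    simp [h i, h.notMem_right]
  · by_cases hiB : i ∈ B <;> simp [sum_filter, h i, hip, hiB]

theorem IsStarFeedback.sum_feedback_out {R : Type*} [CommRing R]
    (h : IsStarFeedback adj σ p A B)
    (y : Fin n → R) (i : Fin n) :
    ∑ j ∈ univ.filter (fun j => (σ i, σ j) ∈ feedbackArcSet adj σ), y j =
      (if i = p then ∑ b ∈ B, y b else 0) + (if i ∈ A then y p else 0) := by
  by_cases hip : i = p
  · subst hip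
    simp [(h · i), h.notMem_left]
  · by_cases hiA : i ∈ A <;> simp [sum_filter, (h · i), hip, hiA]

theorem IsStarFeedback.toggleMap_apply {R : Type*} [CommRing R] (h : IsStarFeedback adj σ p A B)
    (hirr : ∀ v, ¬ adj v v) (htour : ∀ u v, u ≠ v → (adj u v ↔ ¬ adj v u)) (x : V → R)
    (i : Fin n) : toggleMap adj R x (σ i) = starToggle p A B (x ∘ σ) i := by
  have hreindex : ∑ u ∈ univ.filter (fun u => adj u (σ i)), x u =
      ∑ j ∈ univ.filter (fun j => adj (σ j) (σ i)), x (σ j) := by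
    rw [sum_filter, sum_filter]
    exact (σ.sum_comp fun u => if adj u (σ i) then x u else 0).symm
  simp only [toggleMap, AddMonoidHom.coe_mk, ZeroHom.coe_mk, hreindex, sum_adj_eq σ hirr htour,
    h.sum_feedback_into, h.sum_feedback_out, starToggle, Function.comp_apply]
  rw [← Iio_insert, sum_insert notMem_Iio_self]
  split_ifs <;> ring

theorem IsStarFeedback.toggleMap_eq_zero_imp_iff {R : Type*} [CommRing R]
    (h : IsStarFeedback adj σ p A B) (hirr : ∀ v, ¬ adj v v)
    (htour : ∀ u v, u ≠ v → (adj u v ↔ ¬ adj v u)) :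
    (∀ x : V → R, toggleMap adj R x = 0 → x = 0) ↔
      ∀ y : Fin n → R, starToggle p A B y = 0 → y = 0 := by
  constructor
  · intro hx y hy
    have h0 : toggleMap adj R (y ∘ σ.symm) = 0 := funext fun v => by
      obtain ⟨i, rfl⟩ := σ.surjective v
      rw [h.toggleMap_apply hirr htour]
      simpa [Function.comp_def] using congrFun hy i
    funext i
    simpa using congrFun (hx _ h0) (σ i)
  · intro hy x hx
    have h0 : starToggle p A B (x ∘ σ) = 0 := funext fun i => by
      rw [← h.toggleMap_apply hirr htour, hx, Pi.zero_apply, Pi.zero_apply]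
    funext v
    obtain ⟨i, rfl⟩ := σ.surjective v
    exact congrFun (hy _ h0) i

theorem IsStarFeedback.isHeadFeedback_iff (h : IsStarFeedback adj σ p A B) (hA : A.Nonempty)
    (i : Fin n) : isHeadFeedback adj σ (σ i) ↔ i = p ∨ i ∈ B := by
  obtain ⟨a, ha⟩ := hA
  simp only [isHeadFeedback, σ.surjective.exists, h i]
  exact ⟨fun ⟨j, hj⟩ => hj.imp And.right And.right, fun hi =>
    hi.elim (fun hip => ⟨a, Or.inl ⟨ha, hip⟩⟩) fun hiB => ⟨p, Or.inr ⟨rfl, hiB⟩⟩⟩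

theorem IsStarFeedback.isTailFeedback_iff (h : IsStarFeedback adj σ p A B) (hB : B.Nonempty)
    (i : Fin n) : isTailFeedback adj σ (σ i) ↔ i = p ∨ i ∈ A := by
  obtain ⟨b, hb⟩ := hB
  simp only [isTailFeedback, σ.surjective.exists, (h · i)]
  exact ⟨fun ⟨j, hj⟩ => hj.symm.imp And.left And.left, fun hi =>
    hi.elim (fun hip => ⟨b, Or.inr ⟨hip, hb⟩⟩) fun hiA => ⟨p, Or.inl ⟨hiA, rfl⟩⟩⟩

theorem IsStarFeedback.numFeedbackIntervals_eq (h : IsStarFeedback adj σ p A B)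
    (hAne : A.Nonempty) (hBne : B.Nonempty) (hA : ∀ a ∈ A, (p : ℕ) + 1 < a)
    (hB : ∀ b ∈ B, (b : ℕ) + 1 < p) :
    numFeedbackIntervals adj σ =
      #{i | IsRunStart (· ∈ A) i} + #{i | IsRunStart (· ∈ B) i} + 1 := by
  have hhead : (fun t => isHeadFeedback adj σ (σ t)) = fun t => t = p ∨ t ∈ B :=
    funext fun t => propext (h.isHeadFeedback_iff hAne t)
  have htail : (fun t => isTailFeedback adj σ (σ t)) = fun t => t = p ∨ t ∈ A :=
    funext fun t => propext (h.isTailFeedback_iff hBne t)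
  have := card_isRun_or_isRun p hB hA
  rw [← hhead, ← htail, add_comm #{i | IsRunStart (· ∈ B) i}] at this
  exact this

end Star

theorem ZMod.natCast_mem_nonZeroDivisors_iff {k : ℕ} [NeZero k] (m : ℕ) :
    (m : ZMod k) ∈ nonZeroDivisors (ZMod k) ↔ Nat.Coprime k m := by
  rw [← isUnit_iff_mem_nonZeroDivisors_of_finite, ZMod.isUnit_iff_coprime, Nat.coprime_comm]

theorem kAW_iff_of_star_feedback_general {V : Type*} [Fintype V]
    (adj : V → V → Prop) (hirr : ∀ v : V, ¬ adj v v)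
    (htour : ∀ u v : V, u ≠ v → (adj u v ↔ ¬ adj v u))
    (k : ℕ) (hk : 2 ≤ k)
    {n : ℕ} (σ : Fin n ≃ V)
    (hmin : ∀ τ : Fin n ≃ V, (feedbackArcSet adj σ).card ≤ (feedbackArcSet adj τ).card)
    (s t : ℕ) (hs : 1 ≤ s) (ht : 1 ≤ t)
    -- the subdigraph arc-induced by the feedback arc set is an `(s,t)`-directed star
    (hstar : ∃ (c : V) (f : Fin s → V) (g : Fin t → V),
      Function.Injective f ∧ Function.Injective g ∧
      (∀ i, f i ≠ c) ∧ (∀ j, g j ≠ c) ∧ (∀ i j, f i ≠ g j) ∧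
      (∀ u w : V, (u, w) ∈ feedbackArcSet adj σ ↔
        ((∃ i, u = f i ∧ w = c) ∨ (u = c ∧ ∃ j, w = g j))))
    (m : ℕ) (hm : numFeedbackIntervals adj σ = m) :
    kAW adj k ↔ Nat.gcd k m = 1 := by
  have : NeZero k := ⟨by omega⟩
  have : Nonempty (Fin s) := ⟨⟨0, hs⟩⟩
  have : Nonempty (Fin t) := ⟨⟨0, ht⟩⟩
  obtain ⟨c, f, g, -, -, -, -, -, hfas⟩ := hstar
  obtain ⟨p, A, B, hS, hAne, hBne⟩ := exists_isStarFeedback hfas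
  have hA : ∀ a ∈ A, (p : ℕ) + 1 < a := fun a => hS.succ_lt_of_mem_left htour hmin
  have hB : ∀ b ∈ B, (b : ℕ) + 1 < p := fun b => hS.succ_lt_of_mem_right htour hmin
  rw [kAW_iff_toggleMap_eq_zero_imp, hS.toggleMap_eq_zero_imp_iff hirr htour,
    starToggle_eq_zero_imp_iff hA hB, ← hm, hS.numFeedbackIntervals_eq hAne hBne hA hB,
    ZMod.natCast_mem_nonZeroDivisors_iff, Nat.coprime_iff_gcd_eq_one]

/-- A strongly connected tournament with a minimum feedback arc set that arc-induces an
`(s,t)`-directed star, having `m` feedback intervals, is `k`-AW iff `gcd(k, m) = 1`. -/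
theorem kAW_iff_of_star_feedback {V : Type*} [Fintype V]
    (adj : V → V → Prop) (hirr : ∀ v : V, ¬ adj v v)
    (htour : ∀ u v : V, u ≠ v → (adj u v ↔ ¬ adj v u))
    (hstrong : ∀ v w : V, Relation.ReflTransGen adj v w)
    (k : ℕ) (hk : 2 ≤ k)
    {n : ℕ} (hn : Fintype.card V = n) (σ : Fin n ≃ V)
    (hmin : ∀ τ : Fin n ≃ V, (feedbackArcSet adj σ).card ≤ (feedbackArcSet adj τ).card)
    (s t : ℕ) (hs : 1 ≤ s) (ht : 1 ≤ t)
    -- the subdigraph arc-induced by the feedback arc set is an `(s,t)`-directed star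
    (hstar : ∃ (c : V) (f : Fin s → V) (g : Fin t → V),
      Function.Injective f ∧ Function.Injective g ∧
      (∀ i, f i ≠ c) ∧ (∀ j, g j ≠ c) ∧ (∀ i j, f i ≠ g j) ∧
      (∀ u w : V, (u, w) ∈ feedbackArcSet adj σ ↔
        ((∃ i, u = f i ∧ w = c) ∨ (u = c ∧ ∃ j, w = g j))))
    (m : ℕ) (hm : numFeedbackIntervals adj σ = m) :
    kAW adj k ↔ Nat.gcd k m = 1 :=
  kAW_iff_of_star_feedback_general adj hirr htour k hk σ hmin s t hs ht hstar m hm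
end
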